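/- arXiv:2203.01165 — 6 statements merged into one kernel-verified Lean document; each statement's English description precedes it below -/
import Mathlib

section
/- Let X be a Hausdorff topological space, E : X → Type a family such that each fibre E x is a normed additive commutative group, and suppose the total space T = Σ_{x∈X} E x carries a topology satisfying: (i) the projection p : T → X is continuous; (ii) the norm map T → ℝ, (x,e) ↦ ‖e‖, is upper semicontinuous; (iii) fibrewise subtraction is continuous, i.e. the map {(a,b) ∈ T × T : p(a) = p(b)} → T sending (a,b) to a − b (computed in the common fibre) is continuous for the subspace topology; and (iv) for each x ∈ X, every net (a_i) in T with ‖a_i‖ → 0 and p(a_i) → x converges in T to the zero element 0_x of the fibre E x. Then for every x ∈ X, the subspace topology that the fibre E x = p⁻¹(x) inherits from T coincides with the norm topology of E x. -/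
/-!
Write `ι e = ⟨x, e⟩`. Fibrewise subtraction reduces both comparisons to convergence to
`ι 0`. If `ι eᵢ → ι e`, then `ι (eᵢ - e) → ι 0`, and upper semicontinuity of the norm at
a vector of norm `0` forces `‖eᵢ - e‖ → 0`. Conversely, if `eᵢ → e` in norm, axiom (iv)
gives `ι (e - eᵢ) → ι 0`, and subtracting this from the constant `ι e` gives `ι eᵢ → ι e`.
-/

open Filter Topology

/-- Axiom (iii): subtraction is continuous on the fibred product `T ×_X T`. -/
def FibrewiseSubContinuous {X : Type*} (E : X → Type*) [∀ x, NormedAddCommGroup (E x)]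
    [TopologicalSpace (Σ x, E x)] : Prop :=
  Continuous fun q : {p : (Σ x, E x) × (Σ x, E x) // p.1.1 = p.2.1} =>
    (⟨q.1.1.1, q.1.1.2 - cast (congrArg E q.2).symm q.1.2.2⟩ : Σ x, E x)

section FibrewiseTopology

variable {X : Type*} {E : X → Type*} [∀ x, NormedAddCommGroup (E x)]
  [TopologicalSpace (Σ x, E x)]

theorem FibrewiseSubContinuous.tendsto_sigma_mk_sub (hsub : FibrewiseSubContinuous E)
    {α : Type*} {l : Filter α} {x : X} {f g : α → E x} {a b : E x}
    (hf : Tendsto (fun i => (⟨x, f i⟩ : Σ x, E x)) l (𝓝 ⟨x, a⟩))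
    (hg : Tendsto (fun i => (⟨x, g i⟩ : Σ x, E x)) l (𝓝 ⟨x, b⟩)) :
    Tendsto (fun i => (⟨x, f i - g i⟩ : Σ x, E x)) l (𝓝 ⟨x, a - b⟩) := by
  have hpair : Tendsto (fun i => (⟨(⟨x, f i⟩, ⟨x, g i⟩), rfl⟩ :
      {p : (Σ x, E x) × (Σ x, E x) // p.1.1 = p.2.1})) l (𝓝 ⟨(⟨x, a⟩, ⟨x, b⟩), rfl⟩) :=
    tendsto_subtype_rng.2 (hf.prodMk_nhds hg)
  exact (hsub.tendsto _).comp hpair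

theorem tendsto_norm_snd_of_tendsto_zero
    (hnorm : UpperSemicontinuous fun t : Σ x, E x => ‖t.2‖)
    {α : Type*} {l : Filter α} {x : X} {t : α → Σ x, E x}
    (ht : Tendsto t l (𝓝 ⟨x, 0⟩)) :
    Tendsto (fun i => ‖(t i).2‖) l (𝓝 0) := by
  refine tendsto_order.2 ⟨fun b hb => .of_forall fun i => hb.trans_le (norm_nonneg _),
    fun b hb => ht.eventually (hnorm _ b ?_)⟩
  simpa using hb

theorem tendsto_of_tendsto_sigma_mk (hsub : FibrewiseSubContinuous E)
    (hnorm : UpperSemicontinuous fun t : Σ x, E x => ‖t.2‖)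
    {α : Type*} {l : Filter α} {x : X} {f : α → E x} {a : E x}
    (hf : Tendsto (fun i => (⟨x, f i⟩ : Σ x, E x)) l (𝓝 ⟨x, a⟩)) :
    Tendsto f l (𝓝 a) := by
  have hsub_a : Tendsto (fun i => (⟨x, f i - a⟩ : Σ x, E x)) l (𝓝 ⟨x, 0⟩) := by
    simpa using hsub.tendsto_sigma_mk_sub hf (tendsto_const_nhds (x := (⟨x, a⟩ : Σ x, E x)))
  exact tendsto_iff_norm_sub_tendsto_zero.2 (tendsto_norm_snd_of_tendsto_zero hnorm hsub_a)

theorem continuous_sigma_mk_of_tendsto_zero [TopologicalSpace X]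
    (hsub : FibrewiseSubContinuous E)
    (hzero : ∀ (x : X) (l : Filter (Σ x, E x)),
      Tendsto (fun t : Σ x, E x => ‖t.2‖) l (𝓝 0) →
      Tendsto (Sigma.fst : (Σ x, E x) → X) l (𝓝 x) →
      l ≤ 𝓝 (⟨x, 0⟩ : Σ x, E x))
    (x : X) : Continuous fun e : E x => (⟨x, e⟩ : Σ x, E x) := by
  refine continuous_iff_continuousAt.2 fun e => ?_
  have hnorm_sub : Tendsto (fun e' : E x => ‖e - e'‖) (𝓝 e) (𝓝 0) := by
    simpa using ((continuous_const (y := e)).sub continuous_id).norm.tendsto e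
  have hzero_sub : Tendsto (fun e' : E x => (⟨x, e - e'⟩ : Σ x, E x)) (𝓝 e) (𝓝 ⟨x, 0⟩) :=
    hzero x _ (tendsto_map'_iff.2 hnorm_sub) (tendsto_map'_iff.2 tendsto_const_nhds)
  simpa [ContinuousAt] using
    hsub.tendsto_sigma_mk_sub (tendsto_const_nhds (x := (⟨x, e⟩ : Σ x, E x))) hzero_sub

end FibrewiseTopology

theorem fibre_topology_eq_norm_topology_general {X : Type*} [TopologicalSpace X]
    (E : X → Type*) [∀ x, NormedAddCommGroup (E x)]
    [tT : TopologicalSpace (Σ x, E x)]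
    (hnorm : UpperSemicontinuous fun t : Σ x, E x => ‖t.2‖)
    (hsub : Continuous fun q : {p : (Σ x, E x) × (Σ x, E x) // p.1.1 = p.2.1} =>
      (⟨q.1.1.1, q.1.1.2 - cast (congrArg E q.2).symm q.1.2.2⟩ : Σ x, E x))
    (hzero : ∀ (x : X) (l : Filter (Σ x, E x)),
      Tendsto (fun t : Σ x, E x => ‖t.2‖) l (𝓝 0) →
      Tendsto (Sigma.fst : (Σ x, E x) → X) l (𝓝 x) →
      l ≤ 𝓝 (⟨x, 0⟩ : Σ x, E x)) :
    ∀ x : X, TopologicalSpace.induced (fun e : E x => (⟨x, e⟩ : Σ x, E x)) tT =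
      (inferInstance : TopologicalSpace (E x)) := by
  intro x
  refine le_antisymm ((le_iff_nhds _ _).2 fun e => ?_) ?_
  · rw [nhds_induced]
    exact tendsto_of_tendsto_sigma_mk hsub hnorm tendsto_comap
  · exact continuous_iff_le_induced.1 (continuous_sigma_mk_of_tendsto_zero hsub hzero x)

/-- In an (upper-semicontinuous) Banach bundle over a Hausdorff space, the subspace
topology on each fibre coincides with its norm topology.  The bundle axioms are
made explicit as hypotheses on an arbitrary topology on the total space `Σ x, E x`:
(i) the projection is continuous; (ii) the norm is upper semicontinuous;
(iii) fibrewise subtraction is continuous; (iv) every net (equivalently, filter) on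
the total space along which the norms tend to `0` and the base points tend to `x`
converges to the zero element of the fibre over `x`. -/
theorem fibre_topology_eq_norm_topology {X : Type*} [TopologicalSpace X] [T2Space X]
    (E : X → Type*) [∀ x, NormedAddCommGroup (E x)]
    [tT : TopologicalSpace (Σ x, E x)]
    (hproj : Continuous (Sigma.fst : (Σ x, E x) → X))
    (hnorm : UpperSemicontinuous fun t : Σ x, E x => ‖t.2‖)
    (hsub : Continuous fun q : {p : (Σ x, E x) × (Σ x, E x) // p.1.1 = p.2.1} =>
      (⟨q.1.1.1, q.1.1.2 - cast (congrArg E q.2).symm q.1.2.2⟩ : Σ x, E x))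
    (hzero : ∀ (x : X) (l : Filter (Σ x, E x)),
      Tendsto (fun t : Σ x, E x => ‖t.2‖) l (𝓝 0) →
      Tendsto (Sigma.fst : (Σ x, E x) → X) l (𝓝 x) →
      l ≤ 𝓝 (⟨x, 0⟩ : Σ x, E x)) :
    ∀ x : X, TopologicalSpace.induced (fun e : E x => (⟨x, e⟩ : Σ x, E x)) tT =
      (inferInstance : TopologicalSpace (E x)) :=
  fibre_topology_eq_norm_topology_general E (tT := tT) hnorm hsub hzero
end

section
/- Let A be a complex C*-algebra and f : ℕ → A a sequence with 0 ≤ f(n) for all n. If the sequence of partial sums S_N = ∑_{n<N} f(n) converges in norm to some S ∈ A as N → ∞, then f has unconditional sum S, i.e. the net of finite partial sums F ↦ ∑_{n∈F} f(n), indexed by the finite subsets F of ℕ directed by inclusion, converges to S in norm. -/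
/-- In a complex C*-algebra, if a sequence of nonnegative elements has norm-convergent
partial sums, then it is unconditionally summable with the same sum. -/
theorem positive_series_unconditional {A : Type*} [CStarAlgebra A]
    [PartialOrder A] [StarOrderedRing A]
    (f : ℕ → A) (hf : ∀ n, 0 ≤ f n) (S : A)
    (h : Filter.Tendsto (fun N => ∑ n ∈ Finset.range N, f n) Filter.atTop (nhds S)) :
    HasSum f S := by
  have hsummable : Summable f := by
    rw [summable_iff_vanishing]
    intro e he
    rcases Metric.mem_nhds_iff.mp he with ⟨ε, hε, hball⟩
    have hc : CauchySeq (fun N => ∑ n ∈ Finset.range N, f n) := h.cauchySeq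
    rcases Metric.cauchySeq_iff.mp hc ε hε with ⟨N, hN⟩
    refine ⟨Finset.range N, fun t ht => ?_⟩
    apply hball
    simp only [Metric.mem_ball, dist_zero_right]
    -- bound ∑ t f by the tail sum
    by_cases htne : t.Nonempty
    · set M := (t.max' htne) + 1 with hM
      have hMN : N ≤ M := by
        rcases htne with ⟨x, hx⟩
        have hxN : N ≤ x := by
          by_contra hlt
          exact (Finset.disjoint_left.mp ht hx) (Finset.mem_range.mpr (not_le.mp hlt))
        exact le_trans hxN (le_trans (Finset.le_max' t x hx) (Nat.le_succ _))
      have hsub : t ⊆ Finset.range M \ Finset.range N := by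
        intro x hx
        refine Finset.mem_sdiff.mpr ⟨Finset.mem_range.mpr ?_, fun hxN => (Finset.disjoint_left.mp ht hx) hxN⟩
        exact Nat.lt_succ_of_le (Finset.le_max' t x hx)
      have hle : ∑ n ∈ t, f n ≤ ∑ n ∈ Finset.range M \ Finset.range N, f n :=
        Finset.sum_le_sum_of_subset_of_nonneg hsub (fun i _ _ => hf i)
      have hpos : (0 : A) ≤ ∑ n ∈ t, f n := Finset.sum_nonneg (fun i _ => hf i)
      have hnormle : ‖∑ n ∈ t, f n‖ ≤ ‖∑ n ∈ Finset.range M \ Finset.range N, f n‖ :=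
        CStarAlgebra.norm_le_norm_of_nonneg_of_le hpos hle
      have heq : ∑ n ∈ Finset.range M \ Finset.range N, f n
          = (∑ n ∈ Finset.range M, f n) - ∑ n ∈ Finset.range N, f n := by
        rw [eq_sub_iff_add_eq, Finset.sum_sdiff (Finset.range_subset_range.mpr hMN)]
      have := hN M hMN N le_rfl
      rw [dist_eq_norm] at this
      calc ‖∑ n ∈ t, f n‖ ≤ _ := hnormle
        _ < ε := by rw [heq]; exact this
    · simp only [Finset.not_nonempty_iff_eq_empty] at htne
      simp [htne, hε]
  obtain ⟨S', hS'⟩ := hsummable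
  have := hS'.tendsto_sum_nat
  rwa [tendsto_nhds_unique this h] at hS'
end

section
/- Let A be a complex C*-algebra, I a set, and a, b : I → A. Suppose the family i ↦ (a i)*(a i) has unconditional sum S ∈ A and the family i ↦ (b i)*(b i) has unconditional sum T ∈ A. Then the family i ↦ (a i)*(b i) has an unconditional sum P ∈ A, and ‖P‖ ≤ ‖S‖^{1/2} · ‖T‖^{1/2}. -/
open scoped Real

/-!
Finite partial sums of `∑ (a i)* (b i)` are, up to adjoint, inner products in the Hilbert
`A`-module `A^F`, so the Cauchy–Schwarz inequality for Hilbert C*-modules bounds them by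
`√‖∑_F (a i)* (a i)‖ · √‖∑_F (b i)* (b i)‖`. Applied to finite sets far out, this gives the
Cauchy criterion for summability; applied to all finite sets, it passes to the limit.
-/

section

variable {A : Type*} [CStarAlgebra A]

theorem norm_sum_star_mul_le_of_fintype {ι : Type*} [Fintype ι] (x y : ι → A) :
    ‖∑ i, star (x i) * y i‖ ≤
      √‖∑ i, star (x i) * x i‖ * √‖∑ i, star (y i) * y i‖ := by
  let := CStarAlgebra.spectralOrder A
  have := CStarAlgebra.spectralOrderedRing A
  -- Mathlib's inner product on `A` is `⟪x, y⟫ = y * star x`, hence the adjoints.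
  let toModule (z : ι → A) : WithCStarModule A (ι → A) :=
    (WithCStarModule.equiv _ _).symm fun i => star (z i)
  have h := CStarModule.norm_inner_le (A := A) (WithCStarModule A (ι → A)) (x := toModule x)
    (y := toModule y)
  rw [← norm_star]
  simpa [toModule, WithCStarModule.pi_inner, WithCStarModule.pi_norm,
    WithCStarModule.inner_def, star_sum, star_mul] using h

theorem norm_sum_star_mul_le {I : Type*} (a b : I → A) (s : Finset I) :
    ‖∑ i ∈ s, star (a i) * b i‖ ≤
      √‖∑ i ∈ s, star (a i) * a i‖ * √‖∑ i ∈ s, star (b i) * b i‖ := by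
  simp only [← Finset.sum_coe_sort s]
  exact norm_sum_star_mul_le_of_fintype (fun i : s => a i) (fun i : s => b i)

theorem summable_star_mul_of_summable_star_mul_self {I : Type*} {a b : I → A}
    (ha : Summable fun i => star (a i) * a i) (hb : Summable fun i => star (b i) * b i) :
    Summable fun i => star (a i) * b i := by
  rw [summable_iff_vanishing_norm]
  intro ε hε
  obtain ⟨s₁, hs₁⟩ := summable_iff_vanishing_norm.mp ha ε hε
  obtain ⟨s₂, hs₂⟩ := summable_iff_vanishing_norm.mp hb ε hε
  classical
  refine ⟨s₁ ∪ s₂, fun t ht => ?_⟩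
  calc ‖∑ i ∈ t, star (a i) * b i‖
      ≤ √‖∑ i ∈ t, star (a i) * a i‖ * √‖∑ i ∈ t, star (b i) * b i‖ :=
        norm_sum_star_mul_le a b t
    _ < √ε * √ε := by
        gcongr
        · exact hs₁ t (ht.mono_right Finset.subset_union_left)
        · exact hs₂ t (ht.mono_right Finset.subset_union_right)
    _ = ε := Real.mul_self_sqrt hε.le

end

/-- If `∑ (a i)* (a i)` and `∑ (b i)* (b i)` converge unconditionally in a complex
C*-algebra, then so does the pairing `∑ (a i)* (b i)`, with norm bounded by the
product of the square roots of the norms of the two sums. -/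
theorem pairing_hasSum_of_hasSum_sq {A : Type*} [CStarAlgebra A]
    {I : Type*} (a b : I → A) (S T : A)
    (hS : HasSum (fun i => star (a i) * a i) S)
    (hT : HasSum (fun i => star (b i) * b i) T) :
    ∃ P : A, HasSum (fun i => star (a i) * b i) P ∧
      ‖P‖ ≤ Real.sqrt ‖S‖ * Real.sqrt ‖T‖ := by
  obtain ⟨P, hP⟩ := summable_star_mul_of_summable_star_mul_self hS.summable hT.summable
  exact ⟨P, hP, le_of_tendsto_of_tendsto' hP.norm (hS.norm.sqrt.mul hT.norm.sqrt)
    (norm_sum_star_mul_le a b)⟩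
end

section
/- Let A be a complex C*-algebra, I a set, and a, b : I → A such that the families i ↦ (a i)*(a i) and i ↦ (b i)*(b i) both have unconditional sums in A. Then the family i ↦ (a i + b i)*(a i + b i) has an unconditional sum, and ∑_{i∈I} (a i + b i)*(a i + b i) = ∑_{i∈I} (a i)*(a i) + ∑_{i∈I} (a i)*(b i) + ∑_{i∈I} (b i)*(a i) + ∑_{i∈I} (b i)*(b i), where all four sums on the right exist unconditionally. -/
/-!
On a finite set, Cauchy–Schwarz in the Hilbert `A`-module `Aⁿ` bounds `‖∑ (a i)* (b i)‖²` by
`‖∑ (a i)* (a i)‖ ‖∑ (b i)* (b i)‖`, so the cross sums satisfy the Cauchy criterion whenever the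
two square sums do. The sum of `(a i + b i)* (a i + b i)` then expands into four convergent sums.
-/

open scoped InnerProductSpace WithCStarModule

section CauchySchwarz

variable {A : Type*} [CStarAlgebra A] {ι : Type*}

/-- In `C⋆ᵐᵒᵈ(A, ι → A)` the inner product is `⟪x, y⟫ = ∑ y i * star (x i)`, so
`⟪star b, star a⟫ = ∑ star (a i) * b i`. -/
lemma norm_sum_star_mul_sq_le [Fintype ι] (a b : ι → A) :
    ‖∑ i, star (a i) * b i‖ ^ 2 ≤ ‖∑ i, star (a i) * a i‖ * ‖∑ i, star (b i) * b i‖ := by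
  let := CStarAlgebra.spectralOrder A
  let := CStarAlgebra.spectralOrderedRing A
  let x : C⋆ᵐᵒᵈ(A, ι → A) := (WithCStarModule.equiv A (ι → A)).symm (star b)
  let y : C⋆ᵐᵒᵈ(A, ι → A) := (WithCStarModule.equiv A (ι → A)).symm (star a)
  have hxy : ⟪x, y⟫_A = ∑ i, star (a i) * b i := by
    simp [x, y, WithCStarModule.pi_inner, WithCStarModule.inner_def]
  have hxx : ⟪x, x⟫_A = ∑ i, star (b i) * b i := by
    simp [x, WithCStarModule.pi_inner, WithCStarModule.inner_def]
  have hyy : ⟪y, y⟫_A = ∑ i, star (a i) * a i := by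
    simp [y, WithCStarModule.pi_inner, WithCStarModule.inner_def]
  calc ‖∑ i, star (a i) * b i‖ ^ 2 = ‖⟪x, y⟫_A‖ ^ 2 := by rw [hxy]
    _ ≤ (‖x‖ * ‖y‖) ^ 2 := by gcongr; exact CStarModule.norm_inner_le _
    _ = ‖∑ i, star (a i) * a i‖ * ‖∑ i, star (b i) * b i‖ := by
      rw [mul_pow, CStarModule.norm_sq_eq A, CStarModule.norm_sq_eq A, hxx, hyy, mul_comm]

lemma norm_finset_sum_star_mul_sq_le (s : Finset ι) (a b : ι → A) :
    ‖∑ i ∈ s, star (a i) * b i‖ ^ 2 ≤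
      ‖∑ i ∈ s, star (a i) * a i‖ * ‖∑ i ∈ s, star (b i) * b i‖ := by
  have := norm_sum_star_mul_sq_le (fun i : s => a i) (fun i : s => b i)
  rwa [s.sum_coe_sort (fun i => star (a i) * b i), s.sum_coe_sort (fun i => star (a i) * a i),
    s.sum_coe_sort (fun i => star (b i) * b i)] at this

lemma summable_star_mul {a b : ι → A} (ha : Summable fun i => star (a i) * a i)
    (hb : Summable fun i => star (b i) * b i) : Summable fun i => star (a i) * b i := by
  classical
  rw [summable_iff_vanishing_norm] at ha hb ⊢
  intro ε hε
  obtain ⟨s, hs⟩ := ha ε hε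
  obtain ⟨t, ht⟩ := hb ε hε
  refine ⟨s ∪ t, fun u hu => ?_⟩
  rw [Finset.disjoint_union_right] at hu
  refine lt_of_pow_lt_pow_left₀ 2 hε.le ?_
  calc ‖∑ i ∈ u, star (a i) * b i‖ ^ 2
      ≤ ‖∑ i ∈ u, star (a i) * a i‖ * ‖∑ i ∈ u, star (b i) * b i‖ :=
        norm_finset_sum_star_mul_sq_le u a b
    _ < ε ^ 2 := by
      rw [sq]
      exact mul_lt_mul'' (hs u hu.1) (ht u hu.2) (norm_nonneg _) (norm_nonneg _)

end CauchySchwarz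

/-- If `∑ (a i)* (a i)` and `∑ (b i)* (b i)` converge unconditionally in a complex
C*-algebra, then so do the cross terms and `∑ (a i + b i)* (a i + b i)`, and the
latter is the sum of the four terms. -/
theorem hasSum_add_sq_of_hasSum_sq {A : Type*} [CStarAlgebra A]
    {I : Type*} (a b : I → A) (Sa Sb : A)
    (ha : HasSum (fun i => star (a i) * a i) Sa)
    (hb : HasSum (fun i => star (b i) * b i) Sb) :
    ∃ Sab Sba Ssum : A,
      HasSum (fun i => star (a i) * b i) Sab ∧
      HasSum (fun i => star (b i) * a i) Sba ∧
      HasSum (fun i => star (a i + b i) * (a i + b i)) Ssum ∧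
      Ssum = Sa + Sab + Sba + Sb := by
  obtain ⟨Sab, hab⟩ := summable_star_mul ha.summable hb.summable
  obtain ⟨Sba, hba⟩ := summable_star_mul hb.summable ha.summable
  refine ⟨Sab, Sba, _, hab, hba, ?_, rfl⟩
  convert ((ha.add hab).add hba).add hb using 2 with i
  simp only [star_add, add_mul, mul_add]
  abel
end

section
/- Let A be a complex C*-algebra and I a set. Let X denote the set of families x : I → A such that i ↦ (x i)*(x i) has an unconditional sum in A, and for x ∈ X write ‖x‖_X = ‖∑_{i∈I} (x i)*(x i)‖^{1/2}. Suppose (x_n) is a sequence in X that is Cauchy in the following sense: for every ε > 0 there is N such that for all m, n ≥ N the family i ↦ (x_n i − x_m i)*(x_n i − x_m i) has an unconditional sum of norm less than ε² (these differences are automatically in X). Then there exists x ∈ X such that ‖∑_{i∈I} (x_n i − x i)*(x_n i − x i)‖ → 0 as n → ∞, i.e. ‖x_n − x‖_X → 0. -/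
/-!
The partial sum `∑ i ∈ F, (x i)* (x i)` is the squared norm of `i ↦ (x i)*` in the Hilbert
`A`-module `A^F`, so on every finite set these partial sums obey the triangle inequality. A Cauchy
sequence is Cauchy in each coordinate; its coordinatewise limit `y` inherits the Cauchy estimate on
every finite set uniformly, and the Cauchy criterion for unconditional sums then shows that `y` and
every `x n - y` are square-summable, with `‖∑ (x n i - y i)* (x n i - y i)‖ → 0`.
-/

open Filter Topology WithCStarModule

section L2Restrict

variable {A : Type*} [NonUnitalCStarAlgebra A] {I : Type*}

/-- The adjoint is taken because the inner product of `A` as a module over itself is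
`⟪a, b⟫ = b * star a`. -/
noncomputable def l2Restrict (F : Finset I) : (I → A) →+ C⋆ᵐᵒᵈ(A, F → A) where
  toFun x := (equiv A (F → A)).symm fun i => star (x i)
  map_zero' := by ext; simp
  map_add' x y := by ext; simp

theorem tendsto_l2Restrict {ι : Type*} {l : Filter ι} {x : ι → I → A} {y : I → A}
    (h : ∀ i, Tendsto (fun n => x n i) l (𝓝 (y i))) (F : Finset I) :
    Tendsto (fun n => l2Restrict F (x n)) l (𝓝 (l2Restrict F y)) :=
  (equivL ℂ).symm.continuous.continuousAt.tendsto.comp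
    (tendsto_pi_nhds.mpr fun i => (h i).star)

variable [PartialOrder A] [StarOrderedRing A]

theorem norm_l2Restrict_sq (F : Finset I) (x : I → A) :
    ‖l2Restrict F x‖ ^ 2 = ‖∑ i ∈ F, star (x i) * x i‖ := by
  rw [pi_norm_sq, ← Finset.sum_coe_sort F]
  simp [l2Restrict, inner_def]

theorem norm_le_norm_l2Restrict {F : Finset I} {i : I} (hi : i ∈ F) (x : I → A) :
    ‖x i‖ ≤ ‖l2Restrict F x‖ := by
  simpa [l2Restrict] using norm_apply_le_norm (l2Restrict F x) ⟨i, hi⟩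

theorem summable_star_mul_self_iff_norm_l2Restrict {x : I → A} :
    Summable (fun i => star (x i) * x i) ↔
      ∀ ε > 0, ∃ s : Finset I, ∀ t, Disjoint t s → ‖l2Restrict t x‖ < ε := by
  have hsq : ∀ (t : Finset I) {ε : ℝ}, 0 < ε →
      (‖l2Restrict t x‖ < ε ↔ ‖∑ i ∈ t, star (x i) * x i‖ < ε ^ 2) := fun t ε hε => by
    rw [← norm_l2Restrict_sq, pow_lt_pow_iff_left₀ (norm_nonneg _) hε.le two_ne_zero]
  rw [summable_iff_vanishing_norm]
  constructor
  · intro h ε hε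
    obtain ⟨s, hs⟩ := h (ε ^ 2) (by positivity)
    exact ⟨s, fun t ht => (hsq t hε).mpr (hs t ht)⟩
  · intro h ε hε
    have hε' : 0 < √ε := Real.sqrt_pos.mpr hε
    obtain ⟨s, hs⟩ := h √ε hε'
    exact ⟨s, fun t ht => Real.sq_sqrt hε.le ▸ (hsq t hε').mp (hs t ht)⟩

theorem summable_star_mul_self_sub {x y : I → A} (hx : Summable fun i => star (x i) * x i)
    (hy : Summable fun i => star (y i) * y i) :
    Summable fun i => star ((x - y) i) * (x - y) i := by
  classical
  rw [summable_star_mul_self_iff_norm_l2Restrict] at hx hy ⊢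
  intro ε hε
  obtain ⟨s, hs⟩ := hx (ε / 2) (half_pos hε)
  obtain ⟨s', hs'⟩ := hy (ε / 2) (half_pos hε)
  refine ⟨s ∪ s', fun t ht => ?_⟩
  rw [Finset.disjoint_union_right] at ht
  calc ‖l2Restrict t (x - y)‖ ≤ ‖l2Restrict t x‖ + ‖l2Restrict t y‖ := by
        rw [map_sub]; exact norm_sub_le _ _
    _ < ε / 2 + ε / 2 := add_lt_add (hs t ht.1) (hs' t ht.2)
    _ = ε := add_halves ε

theorem summable_star_mul_self_of_approx {x : I → A}
    (h : ∀ ε > 0, ∃ y : I → A, (Summable fun i => star (y i) * y i) ∧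
      ∀ F, ‖l2Restrict F (x - y)‖ ≤ ε) :
    Summable fun i => star (x i) * x i := by
  rw [summable_star_mul_self_iff_norm_l2Restrict]
  intro ε hε
  obtain ⟨y, hy, hxy⟩ := h (ε / 2) (half_pos hε)
  obtain ⟨s, hs⟩ := summable_star_mul_self_iff_norm_l2Restrict.mp hy (ε / 2) (half_pos hε)
  refine ⟨s, fun t ht => ?_⟩
  calc ‖l2Restrict t x‖ ≤ ‖l2Restrict t y‖ + ‖l2Restrict t (x - y)‖ := by
        rw [map_sub]; exact norm_le_norm_add_norm_sub' _ _
    _ < ε / 2 + ε / 2 := add_lt_add_of_lt_of_le (hs t ht) (hxy t)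
    _ = ε := add_halves ε

theorem norm_l2Restrict_sq_le_of_hasSum {x : I → A} {S : A}
    (h : HasSum (fun i => star (x i) * x i) S) (F : Finset I) :
    ‖l2Restrict F x‖ ^ 2 ≤ ‖S‖ := by
  rw [norm_l2Restrict_sq]
  exact CStarAlgebra.norm_le_norm_of_nonneg_of_le
    (Finset.sum_nonneg fun i _ => star_mul_self_nonneg _)
    (sum_le_hasSum F (fun i _ => star_mul_self_nonneg _) h)

theorem norm_le_of_hasSum_of_norm_l2Restrict_le {x : I → A} {S : A} {c : ℝ}
    (h : HasSum (fun i => star (x i) * x i) S) (hc : ∀ F, ‖l2Restrict F x‖ ≤ c) :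
    ‖S‖ ≤ c ^ 2 :=
  le_of_tendsto h.norm <| Eventually.of_forall fun F => by
    rw [← norm_l2Restrict_sq]
    exact pow_le_pow_left₀ (norm_nonneg _) (hc F) 2

end L2Restrict

/-- Completeness of the ℓ²-type module of `A`-valued families: a sequence that is Cauchy
in the ℓ²-norm `‖x‖ = ‖∑ (x i)* (x i)‖^{1/2}` converges to a family in the module. -/
theorem l2_families_complete {A : Type*} [CStarAlgebra A] {I : Type*}
    (x : ℕ → I → A)
    (hx : ∀ n, ∃ S : A, HasSum (fun i => star (x n i) * x n i) S)
    (hcauchy : ∀ ε : ℝ, 0 < ε → ∃ N : ℕ, ∀ m ≥ N, ∀ n ≥ N,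
      ∃ S : A, HasSum (fun i => star (x n i - x m i) * (x n i - x m i)) S ∧
        ‖S‖ < ε ^ 2) :
    ∃ y : I → A, (∃ S : A, HasSum (fun i => star (y i) * y i) S) ∧
      ∀ ε : ℝ, 0 < ε → ∃ N : ℕ, ∀ n ≥ N,
        ∃ S : A, HasSum (fun i => star (x n i - y i) * (x n i - y i)) S ∧
          ‖S‖ < ε := by
  let _ : PartialOrder A := CStarAlgebra.spectralOrder A
  have _ : StarOrderedRing A := CStarAlgebra.spectralOrderedRing A
  choose S hS using hx
  have hcauchy' : ∀ ε > 0, ∃ N, ∀ m ≥ N, ∀ n ≥ N, ∀ F, ‖l2Restrict F (x n - x m)‖ < ε := by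
    intro ε hε
    obtain ⟨N, hN⟩ := hcauchy ε hε
    refine ⟨N, fun m hm n hn F => ?_⟩
    obtain ⟨S, hS, hSε⟩ := hN m hm n hn
    exact lt_of_pow_lt_pow_left₀ 2 hε.le ((norm_l2Restrict_sq_le_of_hasSum hS F).trans_lt hSε)
  have hcoord : ∀ i, CauchySeq fun n => x n i := fun i => Metric.cauchySeq_iff.mpr fun ε hε => by
    obtain ⟨N, hN⟩ := hcauchy' ε hε
    refine ⟨N, fun m hm n hn => ?_⟩
    rw [dist_eq_norm]
    exact (norm_le_norm_l2Restrict (Finset.mem_singleton_self i) _).trans_lt (hN n hn m hm {i})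
  choose y hy using fun i => cauchySeq_tendsto_of_complete (hcoord i)
  have hlim : ∀ ε > 0, ∃ N, ∀ n ≥ N, ∀ F, ‖l2Restrict F (x n - y)‖ ≤ ε := by
    intro ε hε
    obtain ⟨N, hN⟩ := hcauchy' ε hε
    refine ⟨N, fun n hn F => le_of_tendsto
      (tendsto_l2Restrict (fun i => tendsto_const_nhds.sub (hy i)) F).norm ?_⟩
    filter_upwards [eventually_ge_atTop N] with m hm
    exact (hN m hm n hn F).le
  have hsum : ∀ n, Summable fun i => star ((x n - y) i) * (x n - y) i := fun n =>
    summable_star_mul_self_of_approx fun ε hε => by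
      obtain ⟨N, hN⟩ := hlim ε hε
      refine ⟨x n - x N, summable_star_mul_self_sub (hS n).summable (hS N).summable, fun F => ?_⟩
      rw [sub_sub_sub_cancel_left]
      exact hN N le_rfl F
  have hy_sum : Summable fun i => star (y i) * y i :=
    summable_star_mul_self_of_approx fun ε hε => by
      obtain ⟨N, hN⟩ := hlim ε hε
      refine ⟨x N, (hS N).summable, fun F => ?_⟩
      rw [map_sub, norm_sub_rev, ← map_sub]
      exact hN N le_rfl F
  refine ⟨y, ⟨_, hy_sum.hasSum⟩, fun ε hε => ?_⟩
  obtain ⟨N, hN⟩ := hlim √(ε / 2) (by positivity)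
  refine ⟨N, fun n hn => ⟨_, (hsum n).hasSum, ?_⟩⟩
  calc _ ≤ √(ε / 2) ^ 2 := norm_le_of_hasSum_of_norm_l2Restrict_le (hsum n).hasSum (hN n hn)
    _ < ε := by rw [Real.sq_sqrt (by positivity)]; linarith
end

section
/- Let G be a countable discrete group, ℓ²(G) the Hilbert space of square-summable complex functions on G, λ_g the left-translation unitary (λ_g f)(x) = f(g⁻¹x), C*_r(G) the operator-norm closure in the bounded operators on ℓ²(G) of the *-subalgebra generated by {λ_g : g ∈ G}, δ_γ the indicator function of γ, e the identity of G, and j(a)(γ) = ⟨δ_γ, a δ_e⟩. Then j is a linear map on C*_r(G) such that: (1) for every finite linear combination a = ∑_{g∈F} c_g λ_g (F ⊆ G finite, c_g ∈ ℂ), j(a)(γ) = c_γ for γ ∈ F and j(a)(γ) = 0 for γ ∉ F; (2) j is norm reducing into c₀(G), i.e. sup_{γ∈G} |j(a)(γ)| ≤ ‖a‖ and for every ε > 0 the set {γ ∈ G : |j(a)(γ)| ≥ ε} is finite; and (3) j is injective: if a ∈ C*_r(G) and j(a)(γ) = 0 for all γ ∈ G, then a = 0. -/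
/-! `j(a) = a δ_e` is a vector of `ℓ²(G)`, which gives both the bound by `‖a‖` and the decay at
infinity. For injectivity: left translations commute with the right translations
`ρ_g f = f (· * g)`, and `star ρ_g = ρ_{g⁻¹}`, so all of `C*_r(G)` lies in the closed
star-subalgebra commuting with `ρ`. Hence `a δ_γ = a ρ_{γ⁻¹} δ_e = ρ_{γ⁻¹} (a δ_e)`, and `j(a) = 0`
forces `a` to vanish on the basis `(δ_γ)`. -/

/-- The element `j(a)(γ) = ⟨δ_γ, a δ_e⟩` of the ℓ²-matrix-coefficient map, for a bounded
operator `a` on `ℓ²(G)`.  The inner product is conjugate-linear in the first variable. -/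
noncomputable def jmap {G : Type*} [Group G] [DecidableEq G]
    (a : lp (fun _ : G => ℂ) 2 →L[ℂ] lp (fun _ : G => ℂ) 2) (γ : G) : ℂ :=
  inner (𝕜 := ℂ) (lp.single 2 γ (1 : ℂ)) (a (lp.single 2 (1 : G) (1 : ℂ)))

/-- The reduced group C*-algebra: the operator-norm closure of the ∗-subalgebra of
bounded operators on `ℓ²(G)` generated by the left-translation unitaries. -/
noncomputable def reducedGroupCStarAlgebra {G : Type*} [Group G]
    (lam : G → (lp (fun _ : G => ℂ) 2 →L[ℂ] lp (fun _ : G => ℂ) 2)) :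
    StarSubalgebra ℂ (lp (fun _ : G => ℂ) 2 →L[ℂ] lp (fun _ : G => ℂ) 2) :=
  (StarAlgebra.adjoin ℂ (Set.range lam)).topologicalClosure

open scoped ENNReal
open Filter

local notation "ℓ²(" G ")" => lp (fun _ : G => ℂ) 2

namespace lp

variable {α : Type*} {E : α → Type*} [∀ i, NormedAddCommGroup (E i)] {p : ℝ≥0∞}

theorem finite_setOf_le_norm (hp : 0 < p.toReal) (f : lp E p) {ε : ℝ} (hε : 0 < ε) :
    {i | ε ≤ ‖f i‖}.Finite := by
  have hsmall : ∀ᶠ i in cofinite, ‖f i‖ ^ p.toReal < ε ^ p.toReal :=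
    ((lp.memℓp f).summable hp).tendsto_cofinite_zero.eventually_lt_const (by positivity)
  refine (eventually_cofinite.mp hsmall).subset fun i hi => ?_
  exact not_lt.mpr (Real.rpow_le_rpow hε.le hi hp.le)

theorem eq_zero_of_apply_single_one {𝕜 F : Type*} [NormedField 𝕜] [AddCommMonoid F] [Module 𝕜 F]
    [TopologicalSpace F] [T2Space F] [DecidableEq α] [Fact (1 ≤ p)] (hp : p ≠ ⊤)
    (a : lp (fun _ : α => 𝕜) p →L[𝕜] F) (h : ∀ i, a (lp.single p i 1) = 0) : a = 0 :=
  ext_continuousLinearMap hp fun i => ContinuousLinearMap.ext_ring (by simpa using h i)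

end lp

section RightTranslation

variable {G : Type*} [Group G]

theorem memℓp_comp_mul_right (g : G) (f : ℓ²(G)) : Memℓp (fun x => f (x * g)) 2 :=
  memℓp_gen <| ((lp.memℓp f).summable (by norm_num)).comp_injective (Equiv.mulRight g).injective

noncomputable def rightTranslation (g : G) : ℓ²(G) →L[ℂ] ℓ²(G) :=
  LinearIsometry.toContinuousLinearMap
    { toFun f := ⟨fun x => f (x * g), memℓp_comp_mul_right g f⟩
      map_add' _ _ := rfl
      map_smul' _ _ := rfl
      norm_map' f := by
        have h2 : 0 < (2 : ℝ≥0∞).toReal := by norm_num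
        rw [lp.norm_eq_tsum_rpow h2, lp.norm_eq_tsum_rpow h2]
        exact congrArg (· ^ _) ((Equiv.mulRight g).tsum_eq fun x => ‖f x‖ ^ _) }

@[simp]
theorem rightTranslation_apply (g : G) (f : ℓ²(G)) (x : G) : rightTranslation g f x = f (x * g) :=
  rfl

theorem rightTranslation_single_one [DecidableEq G] (γ : G) :
    rightTranslation γ⁻¹ (lp.single 2 (1 : G) (1 : ℂ)) = lp.single 2 γ (1 : ℂ) := by
  ext x
  simp only [rightTranslation_apply, lp.single_apply, Pi.single_apply, mul_inv_eq_one]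

theorem star_rightTranslation (g : G) : star (rightTranslation g) = rightTranslation g⁻¹ := by
  rw [ContinuousLinearMap.star_eq_adjoint, eq_comm, ContinuousLinearMap.eq_adjoint_iff]
  intro f f'
  rw [lp.inner_eq_tsum, lp.inner_eq_tsum, ← (Equiv.mulRight g).tsum_eq]
  simp

end RightTranslation

section LeftTranslation

variable {G : Type*} [Group G] {lam : G → ℓ²(G) →L[ℂ] ℓ²(G)}

theorem mem_centralizer_range_rightTranslation_iff {a : ℓ²(G) →L[ℂ] ℓ²(G)} :
    a ∈ StarSubalgebra.centralizer ℂ (Set.range rightTranslation) ↔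
      ∀ g : G, Commute a (rightTranslation g) := by
  simp only [StarSubalgebra.mem_centralizer_iff, Set.forall_mem_range, star_rightTranslation]
  exact ⟨fun h g => ((h g).1).symm, fun h g => ⟨(h g).symm, (h g⁻¹).symm⟩⟩

theorem commute_leftTranslation_rightTranslation
    (hlam : ∀ (g : G) (f : ℓ²(G)) (x : G), lam g f x = f (g⁻¹ * x)) (g h : G) :
    Commute (lam h) (rightTranslation g) := by
  ext f x
  simp only [mul_apply_eq_comp, hlam, rightTranslation_apply, mul_assoc]

theorem reducedGroupCStarAlgebra_le_centralizer
    (hlam : ∀ (g : G) (f : ℓ²(G)) (x : G), lam g f x = f (g⁻¹ * x)) :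
    reducedGroupCStarAlgebra lam ≤ StarSubalgebra.centralizer ℂ (Set.range rightTranslation) := by
  refine StarSubalgebra.topologicalClosure_minimal (StarAlgebra.adjoin_le ?_) ?_
  · rintro _ ⟨h, rfl⟩
    exact mem_centralizer_range_rightTranslation_iff.2 fun g =>
      commute_leftTranslation_rightTranslation hlam g h
  · rw [StarSubalgebra.coe_centralizer]
    exact Set.isClosed_centralizer _

theorem leftTranslation_single [DecidableEq G]
    (hlam : ∀ (g : G) (f : ℓ²(G)) (x : G), lam g f x = f (g⁻¹ * x)) (g γ : G) (c : ℂ) :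
    lam g (lp.single 2 γ c) = lp.single 2 (g * γ) c := by
  ext x
  simp only [hlam, lp.single_apply, Pi.single_apply, inv_mul_eq_iff_eq_mul]

end LeftTranslation

section JMap

variable {G : Type*} [Group G] [DecidableEq G]

theorem jmap_eq_apply (a : ℓ²(G) →L[ℂ] ℓ²(G)) (γ : G) :
    jmap a γ = a (lp.single 2 (1 : G) (1 : ℂ)) γ := by
  simp [jmap, lp.inner_single_left]

theorem jmap_add (a b : ℓ²(G) →L[ℂ] ℓ²(G)) (γ : G) : jmap (a + b) γ = jmap a γ + jmap b γ :=
  inner_add_right _ _ _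

theorem jmap_smul (c : ℂ) (a : ℓ²(G) →L[ℂ] ℓ²(G)) (γ : G) : jmap (c • a) γ = c * jmap a γ :=
  inner_smul_right _ _ _

theorem jmap_sum_smul_leftTranslation {lam : G → ℓ²(G) →L[ℂ] ℓ²(G)}
    (hlam : ∀ (g : G) (f : ℓ²(G)) (x : G), lam g f x = f (g⁻¹ * x))
    (F : Finset G) (c : G → ℂ) (γ : G) :
    jmap (∑ g ∈ F, c g • lam g) γ = if γ ∈ F then c γ else 0 := by
  simp only [jmap_eq_apply, sum_apply, smul_apply, leftTranslation_single hlam, lp.coeFn_sum,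
    Finset.sum_apply, lp.coeFn_smul, Pi.smul_apply, lp.single_apply, Pi.single_apply, smul_eq_mul,
    mul_ite, mul_one, mul_zero]
  exact Finset.sum_ite_eq F γ c

theorem norm_jmap_le (a : ℓ²(G) →L[ℂ] ℓ²(G)) (γ : G) : ‖jmap a γ‖ ≤ ‖a‖ :=
  calc ‖jmap a γ‖ ≤ ‖a (lp.single 2 (1 : G) (1 : ℂ))‖ := by
        rw [jmap_eq_apply]; exact lp.norm_apply_le_norm (by norm_num) _ γ
    _ ≤ ‖a‖ * ‖(lp.single 2 (1 : G) (1 : ℂ) : ℓ²(G))‖ := a.le_opNorm _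
    _ = ‖a‖ := by rw [lp.norm_single (by norm_num), norm_one, mul_one]

theorem finite_setOf_le_norm_jmap (a : ℓ²(G) →L[ℂ] ℓ²(G)) {ε : ℝ} (hε : 0 < ε) :
    {γ | ε ≤ ‖jmap a γ‖}.Finite := by
  simpa only [jmap_eq_apply] using lp.finite_setOf_le_norm (by norm_num) _ hε

theorem eq_zero_of_jmap_eq_zero {a : ℓ²(G) →L[ℂ] ℓ²(G)}
    (ha : ∀ g : G, Commute a (rightTranslation g)) (h : ∀ γ, jmap a γ = 0) : a = 0 := by
  have hδe : a (lp.single 2 (1 : G) (1 : ℂ)) = 0 := lp.ext <| funext fun γ => by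
    simpa [jmap_eq_apply] using h γ
  refine lp.eq_zero_of_apply_single_one (by norm_num) a fun γ => ?_
  rw [← rightTranslation_single_one, ← mul_apply_eq_comp, (ha γ⁻¹).eq,
    mul_apply_eq_comp, hδe, map_zero]

end JMap

theorem jmap_linear_normReducing_injective_general {G : Type*} [Group G]
    [DecidableEq G]
    (lam : G → (lp (fun _ : G => ℂ) 2 →L[ℂ] lp (fun _ : G => ℂ) 2))
    (hlam : ∀ (g : G) (f : lp (fun _ : G => ℂ) 2) (x : G), lam g f x = f (g⁻¹ * x)) :
    -- `j` is linear
    (∀ a b : lp (fun _ : G => ℂ) 2 →L[ℂ] lp (fun _ : G => ℂ) 2, ∀ γ : G,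
      jmap (a + b) γ = jmap a γ + jmap b γ) ∧
    (∀ (c : ℂ) (a : lp (fun _ : G => ℂ) 2 →L[ℂ] lp (fun _ : G => ℂ) 2) (γ : G),
      jmap (c • a) γ = c * jmap a γ) ∧
    -- (1) values on finite linear combinations of the translation unitaries
    (∀ (F : Finset G) (c : G → ℂ) (γ : G),
      jmap (∑ g ∈ F, c g • lam g) γ = if γ ∈ F then c γ else 0) ∧
    -- (2) `j` is norm reducing into `c₀(G)`
    (∀ a ∈ reducedGroupCStarAlgebra lam, ∀ γ : G, ‖jmap a γ‖ ≤ ‖a‖) ∧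
    (∀ a ∈ reducedGroupCStarAlgebra lam, ∀ ε : ℝ, 0 < ε →
      {γ : G | ε ≤ ‖jmap a γ‖}.Finite) ∧
    -- (3) `j` is injective on `C*_r(G)`
    (∀ a ∈ reducedGroupCStarAlgebra lam, (∀ γ : G, jmap a γ = 0) → a = 0) :=
  ⟨jmap_add, jmap_smul, jmap_sum_smul_leftTranslation hlam,
    fun a _ => norm_jmap_le a,
    fun a _ _ hε => finite_setOf_le_norm_jmap a hε,
    fun _ ha => eq_zero_of_jmap_eq_zero <| mem_centralizer_range_rightTranslation_iff.1 <|
      reducedGroupCStarAlgebra_le_centralizer hlam ha⟩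

/-- Renault's `j`-map for the reduced C*-algebra of a countable discrete group:
`j(a)(γ) = ⟨δ_γ, a δ_e⟩` is linear, satisfies `j(∑_{g∈F} c_g λ_g)(γ) = c_γ` for `γ ∈ F`
(and `= 0` otherwise), is norm reducing into `c₀(G)`, and is injective on `C*_r(G)`. -/
theorem jmap_linear_normReducing_injective {G : Type*} [Group G] [Countable G]
    [DecidableEq G]
    (lam : G → (lp (fun _ : G => ℂ) 2 →L[ℂ] lp (fun _ : G => ℂ) 2))
    (hlam : ∀ (g : G) (f : lp (fun _ : G => ℂ) 2) (x : G), lam g f x = f (g⁻¹ * x)) :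
    -- `j` is linear
    (∀ a b : lp (fun _ : G => ℂ) 2 →L[ℂ] lp (fun _ : G => ℂ) 2, ∀ γ : G,
      jmap (a + b) γ = jmap a γ + jmap b γ) ∧
    (∀ (c : ℂ) (a : lp (fun _ : G => ℂ) 2 →L[ℂ] lp (fun _ : G => ℂ) 2) (γ : G),
      jmap (c • a) γ = c * jmap a γ) ∧
    -- (1) values on finite linear combinations of the translation unitaries
    (∀ (F : Finset G) (c : G → ℂ) (γ : G),
      jmap (∑ g ∈ F, c g • lam g) γ = if γ ∈ F then c γ else 0) ∧
    -- (2) `j` is norm reducing into `c₀(G)`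
    (∀ a ∈ reducedGroupCStarAlgebra lam, ∀ γ : G, ‖jmap a γ‖ ≤ ‖a‖) ∧
    (∀ a ∈ reducedGroupCStarAlgebra lam, ∀ ε : ℝ, 0 < ε →
      {γ : G | ε ≤ ‖jmap a γ‖}.Finite) ∧
    -- (3) `j` is injective on `C*_r(G)`
    (∀ a ∈ reducedGroupCStarAlgebra lam, (∀ γ : G, jmap a γ = 0) → a = 0) :=
  jmap_linear_normReducing_injective_general lam hlam
end
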